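/- arXiv:math/0610896 — 3 statements merged into one kernel-verified Lean document; each statement's English description precedes it below -/
import Mathlib

section
/- The Casimir element Ω = FE + (q^{2m}K^m + K^{−m})/((q^{2m} − 1)(q − q^{−1})) commutes with E, F, and K, and hence lies in the center of U_q(f_m(K)). -/
noncomputable section

inductive UqGen : Type
  | E : UqGen
  | F : UqGen
  | K : UqGen
  | Kinv : UqGen

def lpow {A : Type*} [Monoid A] (x xinv : A) (n : ℤ) : A :=
  if 0 ≤ n then x ^ n.toNat else xinv ^ (-n).toNat

open FreeAlgebra in
inductive UqRel (q : ℂ) (m : ℕ) : FreeAlgebra ℂ UqGen → FreeAlgebra ℂ UqGen → Prop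
  | KE : UqRel q m (ι ℂ UqGen.K * ι ℂ UqGen.E) (q ^ 2 • (ι ℂ UqGen.E * ι ℂ UqGen.K))
  | KF : UqRel q m (ι ℂ UqGen.K * ι ℂ UqGen.F) ((q ^ 2)⁻¹ • (ι ℂ UqGen.F * ι ℂ UqGen.K))
  | KKinv : UqRel q m (ι ℂ UqGen.K * ι ℂ UqGen.Kinv) 1
  | KinvK : UqRel q m (ι ℂ UqGen.Kinv * ι ℂ UqGen.K) 1
  | EF : UqRel q m (ι ℂ UqGen.E * ι ℂ UqGen.F - ι ℂ UqGen.F * ι ℂ UqGen.E)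
      ((q - q⁻¹)⁻¹ • ((ι ℂ UqGen.K) ^ m - (ι ℂ UqGen.Kinv) ^ m))

abbrev Uq (q : ℂ) (m : ℕ) : Type := RingQuot (UqRel q m)

def Egen (q : ℂ) (m : ℕ) : Uq q m := RingQuot.mkAlgHom ℂ (UqRel q m) (FreeAlgebra.ι ℂ UqGen.E)
def Fgen (q : ℂ) (m : ℕ) : Uq q m := RingQuot.mkAlgHom ℂ (UqRel q m) (FreeAlgebra.ι ℂ UqGen.F)
def Kgen (q : ℂ) (m : ℕ) : Uq q m := RingQuot.mkAlgHom ℂ (UqRel q m) (FreeAlgebra.ι ℂ UqGen.K)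
def Kinvgen (q : ℂ) (m : ℕ) : Uq q m := RingQuot.mkAlgHom ℂ (UqRel q m) (FreeAlgebra.ι ℂ UqGen.Kinv)

def Kzpow (q : ℂ) (m : ℕ) (n : ℤ) : Uq q m := lpow (Kgen q m) (Kinvgen q m) n

def Casimir (q : ℂ) (m : ℕ) : Uq q m :=
  Fgen q m * Egen q m +
    (((q ^ (2 * m) - 1) * (q - q⁻¹))⁻¹ * q ^ (2 * m)) • Kgen q m ^ m +
    ((q ^ (2 * m) - 1) * (q - q⁻¹))⁻¹ • Kinvgen q m ^ m

/-!
The computation rests on `K^m E = q^{2m} E K^m`, `E K^{-m} = q^{2m} K^{-m} E` and their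
mirror images for `F`. Moving `E` across `Ω` changes the Cartan part by
`c (q^{2m} - 1)(q^{2m} E K^m - K^{-m} E)` with `c = ((q^{2m} - 1)(q - q⁻¹))⁻¹`, and moving it
across `FE` produces `-(q - q⁻¹)⁻¹ (K^m - K^{-m}) E`; these cancel because
`c (q^{2m} - 1) = (q - q⁻¹)⁻¹`, which is where `q^{2m} ≠ 1` enters. The same happens for `F`,
while `FE`, `K^m` and `K^{-m}` all have weight zero for `K`. An element commuting with the
generators of a presented algebra is central.
-/

def QCommute {R A : Type*} [SMul R A] [Mul A] (c : R) (a b : A) : Prop :=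
  a * b = c • (b * a)

namespace QCommute

section

variable {R A : Type*} [CommSemiring R] [Semiring A] [Algebra R A] {c : R} {a b : A}

theorem pow_left (h : QCommute c a b) (n : ℕ) : QCommute (c ^ n) (a ^ n) b := by
  induction n with
  | zero => simp [QCommute]
  | succ n ih =>
    unfold QCommute at *
    rw [pow_succ, mul_assoc, h, mul_smul_comm, ← mul_assoc, ih, smul_mul_assoc, smul_smul,
      mul_assoc, ← pow_succ, ← pow_succ']

theorem pow_right (h : QCommute c a b) (n : ℕ) : QCommute (c ^ n) a (b ^ n) := by
  induction n with
  | zero => simp [QCommute]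
  | succ n ih =>
    unfold QCommute at *
    rw [pow_succ, ← mul_assoc, ih, smul_mul_assoc, mul_assoc, h, mul_smul_comm, smul_smul,
      ← mul_assoc, ← pow_succ, pow_succ']

theorem swap_units_inv {u : Aˣ} (h : QCommute c (u : A) a) : QCommute c a ↑u⁻¹ := by
  unfold QCommute at *
  calc a * ↑u⁻¹ = ↑u⁻¹ * (↑u * a) * ↑u⁻¹ := by simp [← mul_assoc]
    _ = c • (↑u⁻¹ * a) := by rw [h, mul_smul_comm, smul_mul_assoc]; simp [mul_assoc]

theorem mul_right {d : R} {b' : A} (h : QCommute c a b) (h' : QCommute d a b') :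
    QCommute (c * d) a (b * b') := by
  unfold QCommute at *
  rw [← mul_assoc, h, smul_mul_assoc, mul_assoc, h', mul_smul_comm, smul_smul, mul_assoc]

theorem commute (h : QCommute (1 : R) a b) : Commute a b := by
  rw [QCommute, one_smul] at h
  exact h

end

theorem symm {K A : Type*} [Field K] [Semiring A] [Algebra K A] {c : K} {a b : A}
    (h : QCommute c⁻¹ a b) (hc : c ≠ 0) : QCommute c b a := by
  unfold QCommute at *
  rw [h, smul_smul, mul_inv_cancel₀ hc, one_smul]

end QCommute

theorem RingQuot.mem_center_of_forall_commute_mkAlgHom_ι {R X : Type*} [CommSemiring R]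
    {r : FreeAlgebra R X → FreeAlgebra R X → Prop} {z : RingQuot r}
    (h : ∀ i, Commute z (mkAlgHom R r (FreeAlgebra.ι R i))) :
    z ∈ Subalgebra.center R (RingQuot r) := by
  have hgen : Algebra.adjoin R (Set.range (mkAlgHom R r ∘ FreeAlgebra.ι R)) = ⊤ := by
    rw [Algebra.adjoin_range_eq_range_freeAlgebra_lift, FreeAlgebra.lift_comp_ι,
      AlgHom.range_eq_top]
    exact mkAlgHom_surjective R r
  rw [Subalgebra.mem_center_iff]
  intro b
  refine (Algebra.commute_of_mem_adjoin_of_forall_mem_commute (hgen ▸ Algebra.mem_top) ?_).symm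
  rintro _ ⟨i, rfl⟩
  exact h i

section Relations

variable (q : ℂ) (m : ℕ)

theorem kgen_qCommute_egen : QCommute (q ^ 2) (Kgen q m) (Egen q m) := by
  simpa [QCommute, Egen, Kgen] using RingQuot.mkAlgHom_rel ℂ (UqRel.KE (q := q) (m := m))

theorem kgen_qCommute_fgen : QCommute (q ^ 2)⁻¹ (Kgen q m) (Fgen q m) := by
  simpa [QCommute, Fgen, Kgen] using RingQuot.mkAlgHom_rel ℂ (UqRel.KF (q := q) (m := m))

theorem kgen_mul_kinvgen : Kgen q m * Kinvgen q m = 1 := by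
  simpa [Kgen, Kinvgen] using RingQuot.mkAlgHom_rel ℂ (UqRel.KKinv (q := q) (m := m))

theorem kinvgen_mul_kgen : Kinvgen q m * Kgen q m = 1 := by
  simpa [Kgen, Kinvgen] using RingQuot.mkAlgHom_rel ℂ (UqRel.KinvK (q := q) (m := m))

theorem egen_mul_fgen_sub_fgen_mul_egen :
    Egen q m * Fgen q m - Fgen q m * Egen q m =
      (q - q⁻¹)⁻¹ • (Kgen q m ^ m - Kinvgen q m ^ m) := by
  simpa [Egen, Fgen, Kgen, Kinvgen] using RingQuot.mkAlgHom_rel ℂ (UqRel.EF (q := q) (m := m))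

def Kunit : (Uq q m)ˣ := ⟨Kgen q m, Kinvgen q m, kgen_mul_kinvgen q m, kinvgen_mul_kgen q m⟩

theorem egen_qCommute_kinvgen : QCommute (q ^ 2) (Egen q m) (Kinvgen q m) :=
  (kgen_qCommute_egen q m).swap_units_inv (u := Kunit q m)

variable {q}

theorem fgen_qCommute_kgen (hq0 : q ≠ 0) : QCommute (q ^ 2) (Fgen q m) (Kgen q m) :=
  (kgen_qCommute_fgen q m).symm (pow_ne_zero 2 hq0)

theorem kinvgen_qCommute_fgen (hq0 : q ≠ 0) : QCommute (q ^ 2) (Kinvgen q m) (Fgen q m) :=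
  ((kgen_qCommute_fgen q m).swap_units_inv (u := Kunit q m)).symm (pow_ne_zero 2 hq0)

end Relations

section Casimir

variable {q : ℂ} {m : ℕ}

theorem casimir_coeff_mul_sub_one (hq2m : q ^ (2 * m) ≠ 1) :
    ((q ^ (2 * m) - 1) * (q - q⁻¹))⁻¹ * (q ^ (2 * m) - 1) = (q - q⁻¹)⁻¹ := by
  rw [mul_inv, mul_comm, ← mul_assoc, mul_inv_cancel₀ (sub_ne_zero.mpr hq2m), one_mul]

theorem casimir_commute_egen (hq2m : q ^ (2 * m) ≠ 1) : Commute (Casimir q m) (Egen q m) := by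
  have hKE : Kgen q m ^ m * Egen q m = q ^ (2 * m) • (Egen q m * Kgen q m ^ m) := by
    rw [pow_mul]; exact (kgen_qCommute_egen q m).pow_left m
  have hEK' : Egen q m * Kinvgen q m ^ m = q ^ (2 * m) • (Kinvgen q m ^ m * Egen q m) := by
    rw [pow_mul]; exact (egen_qCommute_kinvgen q m).pow_right m
  have hEF : Egen q m * Fgen q m =
      Fgen q m * Egen q m + (q - q⁻¹)⁻¹ • (Kgen q m ^ m - Kinvgen q m ^ m) :=
    eq_add_of_sub_eq' (egen_mul_fgen_sub_fgen_mul_egen q m)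
  have hc := casimir_coeff_mul_sub_one hq2m
  rw [Commute, SemiconjBy, Casimir]
  generalize ((q ^ (2 * m) - 1) * (q - q⁻¹))⁻¹ = c at hc ⊢
  simp only [add_mul, mul_add, smul_mul_assoc, mul_smul_comm, ← mul_assoc, hEF,
    sub_mul, hKE, hEK']
  match_scalars
  · rfl
  · linear_combination q ^ (2 * m) * hc
  · linear_combination -hc

theorem casimir_commute_fgen (hq0 : q ≠ 0) (hq2m : q ^ (2 * m) ≠ 1) :
    Commute (Casimir q m) (Fgen q m) := by
  have hFK : Fgen q m * Kgen q m ^ m = q ^ (2 * m) • (Kgen q m ^ m * Fgen q m) := by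
    rw [pow_mul]; exact (fgen_qCommute_kgen m hq0).pow_right m
  have hK'F : Kinvgen q m ^ m * Fgen q m = q ^ (2 * m) • (Fgen q m * Kinvgen q m ^ m) := by
    rw [pow_mul]; exact (kinvgen_qCommute_fgen m hq0).pow_left m
  have hEF : Egen q m * Fgen q m =
      Fgen q m * Egen q m + (q - q⁻¹)⁻¹ • (Kgen q m ^ m - Kinvgen q m ^ m) :=
    eq_add_of_sub_eq' (egen_mul_fgen_sub_fgen_mul_egen q m)
  have hc := casimir_coeff_mul_sub_one hq2m
  rw [Commute, SemiconjBy, Casimir]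
  generalize ((q ^ (2 * m) - 1) * (q - q⁻¹))⁻¹ = c at hc ⊢
  simp only [add_mul, mul_add, smul_mul_assoc, mul_smul_comm, mul_assoc, hEF,
    mul_sub, hFK, hK'F]
  match_scalars
  · rfl
  · linear_combination -q ^ (2 * m) * hc
  · linear_combination hc

theorem casimir_commute_kgen (hq0 : q ≠ 0) : Commute (Casimir q m) (Kgen q m) := by
  have hFE : Commute (Fgen q m * Egen q m) (Kgen q m) := by
    have h := (kgen_qCommute_fgen q m).mul_right (kgen_qCommute_egen q m)
    rw [inv_mul_cancel₀ (pow_ne_zero 2 hq0)] at h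
    exact h.commute.symm
  have hK' : Commute (Kinvgen q m) (Kgen q m) :=
    (Commute.refl (Kunit q m : Uq q m)).units_inv_left
  exact (hFE.add_left ((Commute.pow_self _ m).smul_left _)).add_left
    ((hK'.pow_left m).smul_left _)

end Casimir

/-- The Casimir element
`Ω = FE + (q^{2m}K^m + K^{-m})/((q^{2m} - 1)(q - q⁻¹))` commutes with `E`, `F` and
`K`, and hence lies in the center of `U_q(f_m(K))`. -/
theorem stmt6 (q : ℂ) (m : ℕ) (hm : 1 ≤ m) (hq0 : q ≠ 0)
    (hq : ∀ k : ℕ, 0 < k → q ^ k ≠ 1) :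
    Casimir q m * Egen q m = Egen q m * Casimir q m ∧
    Casimir q m * Fgen q m = Fgen q m * Casimir q m ∧
    Casimir q m * Kgen q m = Kgen q m * Casimir q m ∧
    Casimir q m ∈ Subalgebra.center ℂ (Uq q m) := by
  have hq2m : q ^ (2 * m) ≠ 1 := hq (2 * m) (by omega)
  have hE := casimir_commute_egen hq2m
  have hF := casimir_commute_fgen hq0 hq2m
  have hK := casimir_commute_kgen (m := m) hq0
  refine ⟨hE.eq, hF.eq, hK.eq, RingQuot.mem_center_of_forall_commute_mkAlgHom_ι ?_⟩
  rintro (_ | _ | _ | _)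
  · exact hE
  · exact hF
  · exact hK
  · exact hK.units_inv_right (u := Kunit q m)
end
end

section
/- U_q(f(K)) decomposes as a vector space as U_q(F, K^{±1}) ⊗_C U_q(E), where U_q(E) is the subalgebra generated by E and U_q(F, K^{±1}) the subalgebra generated by F, K^{±1}; equivalently the monomials F^a K^b E^c with a, c ≥ 0 and b ∈ Z form a C-basis of U_q(f(K)). -/
noncomputable section

open FreeAlgebra in
/-- The defining relations of `U_q(f(K))`, where the Laurent polynomial `f` is given by
its finitely supported coefficient function `f : ℤ →₀ ℂ`. -/
inductive UqfRel (q : ℂ) (f : ℤ →₀ ℂ) : FreeAlgebra ℂ UqGen → FreeAlgebra ℂ UqGen → Prop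
  | KE : UqfRel q f (ι ℂ UqGen.K * ι ℂ UqGen.E) (q ^ 2 • (ι ℂ UqGen.E * ι ℂ UqGen.K))
  | KF : UqfRel q f (ι ℂ UqGen.K * ι ℂ UqGen.F) ((q ^ 2)⁻¹ • (ι ℂ UqGen.F * ι ℂ UqGen.K))
  | KKinv : UqfRel q f (ι ℂ UqGen.K * ι ℂ UqGen.Kinv) 1
  | KinvK : UqfRel q f (ι ℂ UqGen.Kinv * ι ℂ UqGen.K) 1
  | EF : UqfRel q f (ι ℂ UqGen.E * ι ℂ UqGen.F - ι ℂ UqGen.F * ι ℂ UqGen.E)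
      (f.sum fun i c => c • lpow (ι ℂ UqGen.K) (ι ℂ UqGen.Kinv) i)

/-- The algebra `U_q(f(K))`. -/
abbrev Uqf (q : ℂ) (f : ℤ →₀ ℂ) : Type := RingQuot (UqfRel q f)

def Eg (q : ℂ) (f : ℤ →₀ ℂ) : Uqf q f := RingQuot.mkAlgHom ℂ (UqfRel q f) (FreeAlgebra.ι ℂ UqGen.E)
def Fg (q : ℂ) (f : ℤ →₀ ℂ) : Uqf q f := RingQuot.mkAlgHom ℂ (UqfRel q f) (FreeAlgebra.ι ℂ UqGen.F)
def Kg (q : ℂ) (f : ℤ →₀ ℂ) : Uqf q f := RingQuot.mkAlgHom ℂ (UqfRel q f) (FreeAlgebra.ι ℂ UqGen.K)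
def Kinvg (q : ℂ) (f : ℤ →₀ ℂ) : Uqf q f := RingQuot.mkAlgHom ℂ (UqfRel q f) (FreeAlgebra.ι ℂ UqGen.Kinv)

/-!
The monomials `F^a K^b E^c` span: their span contains `1` and is stable under left multiplication
by the generators, since `K F = q⁻² F K`, `K E = q² E K` and `E F = F E + f(K)` move `K^{±1}` and
`E` to the right past powers of `F` and `K`. They are linearly independent because the same
normal-ordering formulas define an action of `U_q(f(K))` on the space with basis `e_{a,b,c}`
(verifying the defining relations there is a direct computation), in which `F^a K^b E^c` sends
`e_{0,0,0}` to `e_{a,b,c}`.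
-/

section Lpow

variable {A : Type*} [Monoid A]

theorem lpow_eq_of_map_add (φ : ℤ → A) (h0 : φ 0 = 1) (hadd : ∀ m n, φ (m + n) = φ m * φ n)
    (n : ℤ) : lpow (φ 1) (φ (-1)) n = φ n := by
  have hpow (m : ℤ) (k : ℕ) : φ m ^ k = φ (k * m) := by
    induction k with
    | zero => simp [h0]
    | succ k ih => rw [pow_succ, ih, ← hadd]; push_cast; ring_nf
  unfold lpow
  split_ifs with h
  · rw [hpow, Int.toNat_of_nonneg h, mul_one]
  · rw [hpow, Int.toNat_of_nonneg (by omega), mul_neg_one, neg_neg]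

theorem lpow_units (u : Aˣ) (n : ℤ) : lpow (u : A) ↑u⁻¹ n = ↑(u ^ n) := by
  simpa using lpow_eq_of_map_add (fun n => ((u ^ n : Aˣ) : A)) (by simp)
    (fun m n => by simp [zpow_add]) n

theorem map_lpow {B F : Type*} [Monoid B] [FunLike F A B] [MonoidHomClass F A B] (φ : F)
    (x y : A) (n : ℤ) : φ (lpow x y n) = lpow (φ x) (φ y) n := by
  unfold lpow; split_ifs <;> rw [map_pow]

end Lpow

section Commutation

variable {k A : Type*} [Field k] [Ring A] [Algebra k A]

theorem pow_mul_eq_smul_mul_pow {u x : A} {c : k} (h : u * x = c • (x * u)) (m : ℕ) :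
    u ^ m * x = c ^ m • (x * u ^ m) := by
  induction m with
  | zero => simp
  | succ m ih =>
    rw [pow_succ, mul_assoc, h, mul_smul_comm, ← mul_assoc, ih, smul_mul_assoc, smul_smul,
      mul_assoc, pow_succ, mul_comm c]

theorem mul_pow_eq_smul_pow_mul {u x : A} {c : k} (h : u * x = c • (x * u)) (a : ℕ) :
    u * x ^ a = c ^ a • (x ^ a * u) := by
  induction a with
  | zero => simp
  | succ a ih =>
    rw [pow_succ, ← mul_assoc, ih, smul_mul_assoc, mul_assoc, h, mul_smul_comm, smul_smul,
      ← mul_assoc, pow_succ]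

theorem Units.inv_mul_eq_smul_mul_inv {u : Aˣ} {x : A} {c : k} (hc : c ≠ 0)
    (h : ↑u * x = c • (x * ↑u)) : ↑u⁻¹ * x = c⁻¹ • (x * ↑u⁻¹) := by
  have hconj : x * ↑u⁻¹ = c • (↑u⁻¹ * x) :=
    calc x * ↑u⁻¹ = ↑u⁻¹ * (↑u * x) * ↑u⁻¹ := by rw [Units.inv_mul_cancel_left]
      _ = c • (↑u⁻¹ * x) := by
        rw [h, mul_smul_comm, smul_mul_assoc, mul_assoc, mul_assoc, Units.mul_inv, mul_one]
  rw [hconj, smul_smul, inv_mul_cancel₀ hc, one_smul]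

theorem Units.zpow_mul_eq_smul_mul_zpow {u : Aˣ} {x : A} {c : k} (hc : c ≠ 0)
    (h : ↑u * x = c • (x * ↑u)) (n : ℤ) : ↑(u ^ n) * x = c ^ n • (x * ↑(u ^ n)) := by
  cases n with
  | ofNat m => simpa using pow_mul_eq_smul_mul_pow h m
  | negSucc m =>
    simpa [zpow_negSucc, ← inv_pow] using
      pow_mul_eq_smul_mul_pow (Units.inv_mul_eq_smul_mul_inv hc h) (m + 1)

end Commutation

section Span

variable {R A ι : Type*} [CommSemiring R] [Semiring A] [Algebra R A]

open Submodule

theorem mul_mem_span_range {v : ι → A} {y x : A} (hy : ∀ i, y * v i ∈ span R (Set.range v))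
    (hx : x ∈ span R (Set.range v)) : y * x ∈ span R (Set.range v) :=
  (span_le (p := (span R (Set.range v)).comap (LinearMap.mulLeft R y)) |>.mpr
    (Set.range_subset_iff.mpr hy)) hx

theorem span_range_eq_top_of_mul_mem {s : Set A} (hs : Algebra.adjoin R s = ⊤) {v : ι → A}
    (h1 : 1 ∈ span R (Set.range v)) (hmul : ∀ a ∈ s, ∀ i, a * v i ∈ span R (Set.range v)) :
    span R (Set.range v) = ⊤ := by
  suffices h : ∀ a : A, ∀ x ∈ span R (Set.range v), a * x ∈ span R (Set.range v) from
    eq_top_iff'.mpr fun a => mul_one a ▸ h a 1 h1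
  intro a
  induction (hs ▸ Algebra.mem_top : a ∈ Algebra.adjoin R s) using Algebra.adjoin_induction with
  | mem a ha => exact fun x => mul_mem_span_range (hmul a ha)
  | algebraMap r => exact fun x hx => Algebra.smul_def r x ▸ smul_mem _ r hx
  | add a b _ _ ha hb => exact fun x hx => (add_mul a b x).symm ▸ add_mem (ha x hx) (hb x hx)
  | mul a b _ _ ha hb => exact fun x hx => (mul_assoc a b x).symm ▸ ha _ (hb x hx)

theorem RingQuot.adjoin_range_mkAlgHom_ι {X : Type*}
    (r : FreeAlgebra R X → FreeAlgebra R X → Prop) :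
    Algebra.adjoin R (Set.range fun x => RingQuot.mkAlgHom R r (FreeAlgebra.ι R x)) = ⊤ := by
  rw [← Function.comp_def, Set.range_comp, Algebra.adjoin_image, FreeAlgebra.adjoin_range_ι,
    Algebra.map_top, AlgHom.range_eq_top]
  exact RingQuot.mkAlgHom_surjective R r

end Span

namespace Uqf

open Finsupp Submodule

variable {q : ℂ} {f : ℤ →₀ ℂ}

theorem Kg_mul_Eg : Kg q f * Eg q f = q ^ 2 • (Eg q f * Kg q f) := by
  simpa [Eg, Fg, Kg, Kinvg] using RingQuot.mkAlgHom_rel ℂ (UqfRel.KE (q := q) (f := f))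

theorem Kg_mul_Fg : Kg q f * Fg q f = (q ^ 2)⁻¹ • (Fg q f * Kg q f) := by
  simpa [Eg, Fg, Kg, Kinvg] using RingQuot.mkAlgHom_rel ℂ (UqfRel.KF (q := q) (f := f))

theorem Kg_mul_Kinvg : Kg q f * Kinvg q f = 1 := by
  simpa [Eg, Fg, Kg, Kinvg] using RingQuot.mkAlgHom_rel ℂ (UqfRel.KKinv (q := q) (f := f))

theorem Kinvg_mul_Kg : Kinvg q f * Kg q f = 1 := by
  simpa [Eg, Fg, Kg, Kinvg] using RingQuot.mkAlgHom_rel ℂ (UqfRel.KinvK (q := q) (f := f))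

theorem Eg_mul_Fg :
    Eg q f * Fg q f = Fg q f * Eg q f + f.sum fun i c => c • lpow (Kg q f) (Kinvg q f) i := by
  have h := RingQuot.mkAlgHom_rel ℂ (UqfRel.EF (q := q) (f := f))
  rw [map_sub, map_finsuppSum] at h
  simpa [Eg, Fg, Kg, Kinvg, map_lpow, sub_eq_iff_eq_add'] using h

variable (q f) in
def Kunit : (Uqf q f)ˣ := ⟨Kg q f, Kinvg q f, Kg_mul_Kinvg, Kinvg_mul_Kg⟩

theorem lpow_Kg_Kinvg (n : ℤ) : lpow (Kg q f) (Kinvg q f) n = ↑(Kunit q f ^ n) :=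
  lpow_units (Kunit q f) n

variable (q f) in
def monomial (p : ℕ × ℤ × ℕ) : Uqf q f :=
  Fg q f ^ p.1 * lpow (Kg q f) (Kinvg q f) p.2.1 * Eg q f ^ p.2.2

abbrev PBWSpace : Type := (ℕ × ℤ × ℕ) →₀ ℂ

/-- The basis vector standing for `F^a K^b E^c`: the operators `opF`, `opK n`, `opE` below are
left multiplication by `F`, `K^n`, `E`, normally ordered in this basis. -/
def pbw (a : ℕ) (b : ℤ) (c : ℕ) : PBWSpace := single (a, b, c) 1

theorem PBWSpace.endHom_ext {φ ψ : Module.End ℂ PBWSpace}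
    (h : ∀ a b c, φ (pbw a b c) = ψ (pbw a b c)) : φ = ψ :=
  Finsupp.basisSingleOne.ext fun ⟨a, b, c⟩ => by simpa [pbw] using h a b c

variable (q f)

def qsum (a : ℕ) (i : ℤ) : ℂ := ∑ j ∈ Finset.range a, q ^ (-2 * i * j)

def opF : Module.End ℂ PBWSpace := linearCombination ℂ fun p => pbw (p.1 + 1) p.2.1 p.2.2

def opK (n : ℤ) : Module.End ℂ PBWSpace :=
  linearCombination ℂ fun p => q ^ (-2 * p.1 * n) • pbw p.1 (p.2.1 + n) p.2.2

/-- From `E F^a = F^a E + ∑_{j<a} F^j f(K) F^{a-1-j}` and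
`F^j K^i F^{a-1-j} = q^{-2i(a-1-j)} F^{a-1} K^i`. For `a = 0` the truncated `a - 1` is harmless,
as `qsum q 0 i = 0`. -/
def opE : Module.End ℂ PBWSpace := linearCombination ℂ fun p =>
  q ^ (-2 * p.2.1) • pbw p.1 p.2.1 (p.2.2 + 1) +
    f.sum fun i c => (c * qsum q p.1 i) • pbw (p.1 - 1) (p.2.1 + i) p.2.2

variable {q f}

theorem opF_pbw (a : ℕ) (b : ℤ) (c : ℕ) : opF (pbw a b c) = pbw (a + 1) b c := by
  simp [opF, pbw]

theorem opK_pbw (n : ℤ) (a : ℕ) (b : ℤ) (c : ℕ) :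
    opK q n (pbw a b c) = q ^ (-2 * a * n) • pbw a (b + n) c := by
  simp [opK, pbw]

theorem opE_pbw (a : ℕ) (b : ℤ) (c : ℕ) :
    opE q f (pbw a b c) = q ^ (-2 * b) • pbw a b (c + 1) +
      f.sum fun i c' => (c' * qsum q a i) • pbw (a - 1) (b + i) c := by
  simp [opE, pbw]

theorem qsum_succ (a : ℕ) (i : ℤ) : qsum q (a + 1) i = qsum q a i + q ^ (-2 * i * a) := by
  simp [qsum, Finset.sum_range_succ]

theorem opK_zero : opK q 0 = 1 :=
  PBWSpace.endHom_ext fun a b c => by simp [opK_pbw]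

theorem opK_add (hq0 : q ≠ 0) (m n : ℤ) : opK q (m + n) = opK q m * opK q n :=
  PBWSpace.endHom_ext fun a b c => by
    simp only [Module.End.mul_apply, opK_pbw, map_smul, smul_smul, ← zpow_add₀ hq0]
    congr 2 <;> ring

theorem opK_one_mul_opF (hq0 : q ≠ 0) : opK q 1 * opF = (q ^ 2)⁻¹ • (opF * opK q 1) :=
  PBWSpace.endHom_ext fun a b c => by
    simp only [Module.End.mul_apply, LinearMap.smul_apply, opK_pbw, opF_pbw, map_smul, smul_smul,
      ← zpow_natCast, ← zpow_neg, ← zpow_add₀ hq0]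
    congr 2; push_cast; ring

theorem opK_one_mul_opE (hq0 : q ≠ 0) : opK q 1 * opE q f = q ^ 2 • (opE q f * opK q 1) :=
  PBWSpace.endHom_ext fun a b c => by
    simp only [Module.End.mul_apply, LinearMap.smul_apply, opK_pbw, opE_pbw, map_smul, map_add,
      map_finsuppSum, smul_add, Finsupp.smul_sum, smul_smul]
    congr 1
    · congr 1
      simp only [mul_one, mul_add, zpow_add₀ hq0]
      field_simp
    · refine Finsupp.sum_congr fun i _ => ?_
      rcases a with _ | a
      · simp [qsum]
      · rw [add_right_comm]
        congr 1
        push_cast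
        simp only [mul_one, mul_add, zpow_add₀ hq0]
        field_simp

theorem opE_mul_opF_sub :
    opE q f * opF - opF * opE q f = f.sum fun i c => c • opK q i :=
  PBWSpace.endHom_ext fun a b c => by
    rw [LinearMap.sub_apply, Finsupp.sum_apply'' _ _ _ rfl fun _ _ => rfl]
    simp only [Module.End.mul_apply, LinearMap.smul_apply, opK_pbw,
      opE_pbw, opF_pbw, map_smul, map_add, map_finsuppSum, smul_smul, add_sub_add_left_eq_sub,
      ← Finsupp.sum_sub]
    refine Finsupp.sum_congr fun i _ => ?_
    rcases a with _ | a
    · simp [qsum]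
    · rw [Nat.add_sub_cancel, Nat.sub_add_cancel (Nat.succ_pos a), ← sub_smul, qsum_succ]
      congr 1
      ring_nf

variable (q f) in
def generatorAction : UqGen → Module.End ℂ PBWSpace
  | .E => opE q f
  | .F => opF
  | .K => opK q 1
  | .Kinv => opK q (-1)

theorem lpow_opK (hq0 : q ≠ 0) (n : ℤ) : lpow (opK q 1) (opK q (-1)) n = opK q n :=
  lpow_eq_of_map_add (opK q) opK_zero (opK_add hq0) n

theorem lift_generatorAction_rel (hq0 : q ≠ 0) ⦃x y : FreeAlgebra ℂ UqGen⦄ (h : UqfRel q f x y) :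
    FreeAlgebra.lift ℂ (generatorAction q f) x = FreeAlgebra.lift ℂ (generatorAction q f) y := by
  induction h with
  | KE => simpa [generatorAction] using opK_one_mul_opE hq0
  | KF => simpa [generatorAction] using opK_one_mul_opF hq0
  | KKinv => simp [generatorAction, ← opK_add hq0, opK_zero]
  | KinvK => simp [generatorAction, ← opK_add hq0, opK_zero]
  | EF =>
    rw [map_finsuppSum]
    simpa [map_lpow, generatorAction, lpow_opK hq0] using opE_mul_opF_sub

def pbwRep (hq0 : q ≠ 0) : Uqf q f →ₐ[ℂ] Module.End ℂ PBWSpace :=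
  RingQuot.liftAlgHom ℂ ⟨FreeAlgebra.lift ℂ (generatorAction q f), lift_generatorAction_rel hq0⟩

theorem pbwRep_Eg (hq0 : q ≠ 0) : pbwRep hq0 (Eg q f) = opE q f := by
  simp [pbwRep, Eg, generatorAction]

theorem pbwRep_Fg (hq0 : q ≠ 0) : pbwRep hq0 (Fg q f) = opF := by
  simp [pbwRep, Fg, generatorAction]

theorem pbwRep_lpow (hq0 : q ≠ 0) (n : ℤ) :
    pbwRep hq0 (lpow (Kg q f) (Kinvg q f) n) = opK q n := by
  simp [map_lpow, pbwRep, Kg, Kinvg, generatorAction, lpow_opK hq0]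

theorem opE_pow_pbw_zero (c : ℕ) : (opE q f ^ c) (pbw 0 0 0) = pbw 0 0 c := by
  induction c with
  | zero => rfl
  | succ c ih => rw [pow_succ', Module.End.mul_apply, ih, opE_pbw]; simp [qsum]

theorem opF_pow_pbw (a m : ℕ) (b : ℤ) (c : ℕ) : (opF ^ m) (pbw a b c) = pbw (a + m) b c := by
  induction m with
  | zero => rfl
  | succ m ih => rw [pow_succ', Module.End.mul_apply, ih, opF_pbw, add_assoc]

theorem pbwRep_monomial_apply (hq0 : q ≠ 0) (p : ℕ × ℤ × ℕ) :
    pbwRep hq0 (monomial q f p) (pbw 0 0 0) = single p 1 := by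
  obtain ⟨a, b, c⟩ := p
  simp only [monomial, map_mul, map_pow, pbwRep_Eg, pbwRep_Fg, pbwRep_lpow, Module.End.mul_apply,
    opE_pow_pbw_zero, opK_pbw, map_smul, opF_pow_pbw]
  simp [pbw]

theorem linearIndependent_monomial (hq0 : q ≠ 0) : LinearIndependent ℂ (monomial q f) := by
  refine LinearIndependent.of_comp
    (LinearMap.applyₗ (pbw 0 0 0) ∘ₗ (pbwRep hq0).toLinearMap) ?_
  convert Finsupp.basisSingleOne.linearIndependent
  ext1 p
  simp [pbwRep_monomial_apply]

theorem Fg_mul_monomial (a : ℕ) (b : ℤ) (c : ℕ) :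
    Fg q f * monomial q f (a, b, c) = monomial q f (a + 1, b, c) := by
  simp only [monomial, pow_succ', mul_assoc]

theorem lpow_mul_monomial (hq0 : q ≠ 0) (n : ℤ) (a : ℕ) (b : ℤ) (c : ℕ) :
    lpow (Kg q f) (Kinvg q f) n * monomial q f (a, b, c) =
      ((q ^ 2)⁻¹ ^ a) ^ n • monomial q f (a, n + b, c) := by
  have hcomm := Units.zpow_mul_eq_smul_mul_zpow (u := Kunit q f)
    (pow_ne_zero a (inv_ne_zero (pow_ne_zero 2 hq0)))
    (mul_pow_eq_smul_pow_mul (Kg_mul_Fg (q := q) (f := f)) a) n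
  simp only [monomial, lpow_Kg_Kinvg] at hcomm ⊢
  rw [← mul_assoc, ← mul_assoc, hcomm, smul_mul_assoc, smul_mul_assoc, mul_assoc (Fg q f ^ a),
    ← Units.val_mul, ← zpow_add]

theorem lpow_mul_monomial_mem_span (hq0 : q ≠ 0) (n : ℤ) (a : ℕ) (b : ℤ) (c : ℕ) :
    lpow (Kg q f) (Kinvg q f) n * monomial q f (a, b, c) ∈ span ℂ (Set.range (monomial q f)) :=
  lpow_mul_monomial hq0 n a b c ▸ smul_mem _ _ (subset_span ⟨_, rfl⟩)

theorem Eg_mul_monomial_zero (hq0 : q ≠ 0) (b : ℤ) (c : ℕ) :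
    Eg q f * monomial q f (0, b, c) = ((q ^ 2) ^ b)⁻¹ • monomial q f (0, b, c + 1) := by
  have hcomm := Units.zpow_mul_eq_smul_mul_zpow (u := Kunit q f) (pow_ne_zero 2 hq0)
    Kg_mul_Eg b
  have hcomm' : Eg q f * ↑(Kunit q f ^ b) = ((q ^ 2) ^ b)⁻¹ • (↑(Kunit q f ^ b) * Eg q f) := by
    rw [hcomm, smul_smul, inv_mul_cancel₀ (zpow_ne_zero b (pow_ne_zero 2 hq0)), one_smul]
  simp only [monomial, pow_zero, one_mul, lpow_Kg_Kinvg, pow_succ' (Eg q f) c]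
  rw [← mul_assoc, hcomm', smul_mul_assoc, mul_assoc]

theorem Eg_mul_monomial_mem_span (hq0 : q ≠ 0) (a : ℕ) (b : ℤ) (c : ℕ) :
    Eg q f * monomial q f (a, b, c) ∈ span ℂ (Set.range (monomial q f)) := by
  induction a with
  | zero =>
    rw [Eg_mul_monomial_zero hq0]
    exact smul_mem _ _ (subset_span ⟨_, rfl⟩)
  | succ a ih =>
    rw [← Fg_mul_monomial, ← mul_assoc, Eg_mul_Fg, add_mul, mul_assoc, Finsupp.sum_mul]
    refine add_mem (mul_mem_span_range (fun p => ?_) ih) (sum_mem fun i _ => ?_)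
    · exact subset_span ⟨_, (Fg_mul_monomial p.1 p.2.1 p.2.2).symm⟩
    · dsimp only
      rw [smul_mul_assoc]
      exact smul_mem _ _ (lpow_mul_monomial_mem_span hq0 i a b c)

theorem span_monomial_eq_top (hq0 : q ≠ 0) : span ℂ (Set.range (monomial q f)) = ⊤ := by
  refine span_range_eq_top_of_mul_mem (RingQuot.adjoin_range_mkAlgHom_ι (UqfRel q f))
    (subset_span ⟨(0, 0, 0), by simp [monomial, lpow]⟩) ?_
  rintro _ ⟨g, rfl⟩ ⟨a, b, c⟩
  cases g with
  | E => exact Eg_mul_monomial_mem_span hq0 a b c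
  | F => exact subset_span ⟨_, (Fg_mul_monomial a b c).symm⟩
  | K => simpa [lpow, Kg] using lpow_mul_monomial_mem_span (f := f) hq0 1 a b c
  | Kinv => simpa [lpow, Kinvg] using lpow_mul_monomial_mem_span (f := f) hq0 (-1) a b c

end Uqf

theorem stmt8_general (q : ℂ) (f : ℤ →₀ ℂ) (hq0 : q ≠ 0) :
    ∃ b : Module.Basis (ℕ × ℤ × ℕ) ℂ (Uqf q f),
      ∀ p : ℕ × ℤ × ℕ,
        b p = Fg q f ^ p.1 * lpow (Kg q f) (Kinvg q f) p.2.1 * Eg q f ^ p.2.2 :=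
  ⟨.mk (Uqf.linearIndependent_monomial hq0) (Uqf.span_monomial_eq_top hq0).ge,
    fun _ => Module.Basis.mk_apply _ _ _⟩

/-- `U_q(f(K))` decomposes as a vector space as
`U_q(F, K^{±1}) ⊗_ℂ U_q(E)`; equivalently the monomials `F^a K^b E^c` with
`a, c ≥ 0`, `b ∈ ℤ` form a `ℂ`-basis of `U_q(f(K))`. -/
theorem stmt8 (q : ℂ) (f : ℤ →₀ ℂ) (hq0 : q ≠ 0) (hq2 : q ^ 2 ≠ 1) :
    ∃ b : Module.Basis (ℕ × ℤ × ℕ) ℂ (Uqf q f),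
      ∀ p : ℕ × ℤ × ℕ,
        b p = Fg q f ^ p.1 * lpow (Kg q f) (Kinvg q f) p.2.1 * Eg q f ^ p.2.2 :=
  stmt8_general q f hq0
end
end

section
/- Let (V, w) be a Whittaker module for U_q(f_m(K)) of type η, and suppose u ∈ U_q(f_m(K)) satisfies u·K^i·w = 0 for all integers i > 0. Then u·w = 0. -/
noncomputable section

/-! Conjugation by `K` acts diagonalisably on `U_q`: the elements `x` with `x K = c K x` form a
grading by `ℂˣ` (weights multiply, and `E`, `F`, `K^{±1}` are homogeneous), so
`u = ∑ u_c` with distinct weights `c`. Then `u K^i w = K^i ∑ c^i u_c w`, and since `K` is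
invertible the hypothesis says `∑ c^i u_c w = 0` for all `i > 0`. Distinct nonzero geometric
sequences are linearly independent (Dedekind), so every `u_c w` vanishes. -/

theorem eq_zero_of_forall_sum_pow_smul_eq_zero {ι K V : Type*} [Field K] [AddCommGroup V]
    [Module K V] {μ : ι → K} (hμ : Function.Injective μ) {s : Finset ι} {x : ι → V}
    (h : ∀ i : ℕ, ∑ n ∈ s, μ n ^ i • x n = 0) : ∀ n ∈ s, x n = 0 := by
  intro n hn
  rw [← Module.forall_dual_apply_eq_zero_iff K]
  intro φ
  have hli := linearIndependent_iff'.mp <|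
    (linearIndependent_monoidHom (Multiplicative ℕ) K).comp _ ((powersHom K).injective.comp hμ)
  refine hli s (fun n => φ (x n)) (funext fun i => ?_) n hn
  simpa [Finset.sum_apply, mul_comm] using congrArg φ (h i.toAdd)

theorem eq_zero_of_forall_sum_pow_succ_smul_eq_zero {ι K V : Type*} [Field K] [AddCommGroup V]
    [Module K V] {μ : ι → K} (hμ : Function.Injective μ) (hμ0 : ∀ n, μ n ≠ 0) {s : Finset ι}
    {x : ι → V} (h : ∀ i : ℕ, 0 < i → ∑ n ∈ s, μ n ^ i • x n = 0) : ∀ n ∈ s, x n = 0 := by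
  intro n hn
  have := eq_zero_of_forall_sum_pow_smul_eq_zero hμ (x := fun n => μ n • x n)
    (fun i => by simpa [smul_smul, ← pow_succ] using h (i + 1) i.succ_pos) n hn
  exact (smul_eq_zero.mp this).resolve_left (hμ0 n)

namespace Uq

variable {q : ℂ} {m : ℕ}

theorem Kgen_mul_Kinvgen : Kgen q m * Kinvgen q m = 1 := by
  simpa [Kgen, Kinvgen] using RingQuot.mkAlgHom_rel ℂ (UqRel.KKinv (q := q) (m := m))

theorem Kinvgen_mul_Kgen : Kinvgen q m * Kgen q m = 1 := by
  simpa [Kgen, Kinvgen] using RingQuot.mkAlgHom_rel ℂ (UqRel.KinvK (q := q) (m := m))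

theorem Kgen_mul_Egen : Kgen q m * Egen q m = q ^ 2 • (Egen q m * Kgen q m) := by
  simpa [Kgen, Egen] using RingQuot.mkAlgHom_rel ℂ (UqRel.KE (q := q) (m := m))

theorem Kgen_mul_Fgen : Kgen q m * Fgen q m = (q ^ 2)⁻¹ • (Fgen q m * Kgen q m) := by
  simpa [Kgen, Fgen] using RingQuot.mkAlgHom_rel ℂ (UqRel.KF (q := q) (m := m))

theorem isUnit_Kgen : IsUnit (Kgen q m) :=
  ⟨⟨Kgen q m, Kinvgen q m, Kgen_mul_Kinvgen, Kinvgen_mul_Kgen⟩, rfl⟩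

variable (q m) in
def weightSpace (c : ℂ) : Submodule ℂ (Uq q m) where
  carrier := {x | x * Kgen q m = c • (Kgen q m * x)}
  add_mem' {x y} hx hy := by simp_all only [Set.mem_ofPred_eq, add_mul, mul_add, smul_add]
  zero_mem' := by simp
  smul_mem' a x hx := by
    simp_all only [Set.mem_ofPred_eq, smul_mul_assoc, mul_smul_comm, smul_comm a c]

theorem mem_weightSpace {c : ℂ} {x : Uq q m} :
    x ∈ weightSpace q m c ↔ x * Kgen q m = c • (Kgen q m * x) := Iff.rfl

theorem mul_mem_weightSpace {c d : ℂ} {x y : Uq q m} (hx : x ∈ weightSpace q m c)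
    (hy : y ∈ weightSpace q m d) : x * y ∈ weightSpace q m (c * d) := by
  rw [mem_weightSpace] at *
  rw [mul_assoc, hy, mul_smul_comm, ← mul_assoc, hx, smul_mul_assoc, smul_smul, mul_comm d,
    mul_assoc]

theorem weightSpace_mul_le (c d : ℂ) :
    weightSpace q m c * weightSpace q m d ≤ weightSpace q m (c * d) :=
  Submodule.mul_le.mpr fun _ hx _ hy => mul_mem_weightSpace hx hy

theorem mul_Kgen_pow_of_mem_weightSpace {c : ℂ} {x : Uq q m} (hx : x ∈ weightSpace q m c)
    (i : ℕ) : x * Kgen q m ^ i = c ^ i • (Kgen q m ^ i * x) := by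
  induction i with
  | zero => simp
  | succ i ih =>
    rw [pow_succ, ← mul_assoc, ih, smul_mul_assoc, mul_assoc, mem_weightSpace.mp hx,
      mul_smul_comm, smul_smul, ← mul_assoc, ← pow_succ, pow_succ c]

theorem algebraMap_mem_weightSpace (r : ℂ) : algebraMap ℂ (Uq q m) r ∈ weightSpace q m 1 := by
  rw [mem_weightSpace, one_smul, Algebra.commutes]

theorem Kgen_mem_weightSpace : Kgen q m ∈ weightSpace q m 1 := by
  rw [mem_weightSpace, one_smul]

theorem Kinvgen_mem_weightSpace : Kinvgen q m ∈ weightSpace q m 1 := by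
  rw [mem_weightSpace, one_smul, Kgen_mul_Kinvgen, Kinvgen_mul_Kgen]

theorem Egen_mem_weightSpace (hq0 : q ≠ 0) : Egen q m ∈ weightSpace q m (q ^ 2)⁻¹ := by
  rw [mem_weightSpace, Kgen_mul_Egen, smul_smul, inv_mul_cancel₀ (pow_ne_zero 2 hq0), one_smul]

theorem Fgen_mem_weightSpace (hq0 : q ≠ 0) : Fgen q m ∈ weightSpace q m (q ^ 2) := by
  rw [mem_weightSpace, Kgen_mul_Fgen, smul_smul, mul_inv_cancel₀ (pow_ne_zero 2 hq0), one_smul]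

theorem iSup_weightSpace_eq_top (hq0 : q ≠ 0) : ⨆ c : ℂˣ, weightSpace q m c = ⊤ := by
  set W := ⨆ c : ℂˣ, weightSpace q m c
  have mem_W (c : ℂˣ) {x : Uq q m} (hx : x ∈ weightSpace q m c) : x ∈ W :=
    Submodule.mem_iSup_of_mem c hx
  have W_mul_le : W * W ≤ W := by
    simp only [W, Submodule.iSup_mul, Submodule.mul_iSup, iSup_le_iff]
    intro c d
    exact (weightSpace_mul_le _ _).trans (le_iSup (fun e : ℂˣ => weightSpace q m e) (d * c))
  rw [eq_top_iff]
  rintro u -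
  obtain ⟨x, rfl⟩ := RingQuot.mkAlgHom_surjective ℂ (UqRel q m) u
  induction x using FreeAlgebra.induction with
  | grade0 r => exact mem_W 1 (by rw [AlgHom.commutes]; exact algebraMap_mem_weightSpace r)
  | grade1 g =>
    cases g with
    | E => exact mem_W (Units.mk0 _ (inv_ne_zero (pow_ne_zero 2 hq0))) (Egen_mem_weightSpace hq0)
    | F => exact mem_W (Units.mk0 _ (pow_ne_zero 2 hq0)) (Fgen_mem_weightSpace hq0)
    | K => exact mem_W 1 Kgen_mem_weightSpace
    | Kinv => exact mem_W 1 Kinvgen_mem_weightSpace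
  | mul a b ha hb => rw [map_mul]; exact W_mul_le (Submodule.mul_mem_mul ha hb)
  | add a b ha hb => rw [map_add]; exact add_mem ha hb

theorem smul_Kgen_pow_smul_of_mem_weightSpace {V : Type*} [AddCommGroup V] [Module ℂ V]
    [Module (Uq q m) V] [IsScalarTower ℂ (Uq q m) V] {c : ℂ} {x : Uq q m}
    (hx : x ∈ weightSpace q m c) (i : ℕ) (v : V) :
    x • Kgen q m ^ i • v = Kgen q m ^ i • c ^ i • x • v := by
  rw [← mul_smul, mul_Kgen_pow_of_mem_weightSpace hx, smul_assoc, mul_smul, smul_comm]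

end Uq

theorem stmt18_general (q : ℂ) (m : ℕ) (hq0 : q ≠ 0)
    (V : Type) [AddCommGroup V] [Module (Uq q m) V]
    (w : V)
    (u : Uq q m) (hu : ∀ i : ℕ, 0 < i → u • (Kgen q m ^ i • w) = 0) :
    u • w = 0 := by
  let _ : Module ℂ V := Module.compHom V (algebraMap ℂ (Uq q m))
  have : IsScalarTower ℂ (Uq q m) V := .of_algebraMap_smul fun _ _ => rfl
  obtain ⟨f, hf, rfl⟩ := (Submodule.mem_iSup_iff_exists_finsupp _ u).mp
    (Uq.iSup_weightSpace_eq_top (m := m) hq0 ▸ Submodule.mem_top)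
  have hpow : ∀ i, 0 < i → ∑ c ∈ f.support, (c : ℂ) ^ i • f c • w = 0 := by
    intro i hi
    have h := hu i hi
    rw [Finsupp.sum, Finset.sum_smul] at h
    simp_rw [Uq.smul_Kgen_pow_smul_of_mem_weightSpace (hf _)] at h
    rwa [← Finset.smul_sum, (Uq.isUnit_Kgen.pow i).smul_eq_zero] at h
  rw [Finsupp.sum, Finset.sum_smul]
  exact Finset.sum_eq_zero <|
    eq_zero_of_forall_sum_pow_succ_smul_eq_zero Units.val_injective Units.ne_zero hpow

/-- Let `(V, w)` be a Whittaker module for `U_q(f_m(K))` of type `η`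
(`e = η(E) ≠ 0`), and suppose `u ∈ U_q(f_m(K))` satisfies `u·K^i·w = 0` for all
integers `i > 0`. Then `u·w = 0`. -/
theorem stmt18 (q : ℂ) (m : ℕ) (hm : 1 ≤ m) (hq0 : q ≠ 0)
    (hq : ∀ k : ℕ, 0 < k → q ^ k ≠ 1)
    (e : ℂ) (he : e ≠ 0)
    (V : Type) [AddCommGroup V] [Module (Uq q m) V]
    (w : V) (hw0 : w ≠ 0)
    (hw : Egen q m • w = algebraMap ℂ (Uq q m) e • w)
    (hcyc : ∀ v : V, ∃ u : Uq q m, v = u • w)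
    (u : Uq q m) (hu : ∀ i : ℕ, 0 < i → u • (Kgen q m ^ i • w) = 0) :
    u • w = 0 :=
  stmt18_general q m hq0 V w u hu
end
end
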